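/- Let V and W be independent real random variables on a probability space such that V is Gamma-distributed with shape k_V > 0 and scale θ_V > 0 and W is Gamma-distributed with shape k_W > 0 and scale θ_W > 0. Then for every λ > 0, P(V/W ≥ λ) = (Γ(k_V + k_W)/(Γ(k_V)Γ(k_W))) · ∫₀^{ψ′} t^{k_W−1}(1−t)^{k_V−1} dt, where ψ′ = θ_V/(θ_V + λθ_W). -/

import Mathlib

/-!
Conditioning on `W = w` and rescaling `v = w s` shows that on `(0, ∞)` the ratio `V / W` has
density `C s ^ (k_V - 1) / (s / θ_V + 1 / θ_W) ^ (k_V + k_W)`, where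
`C = Γ(k_V + k_W) / (θ_V ^ k_V Γ(k_V) θ_W ^ k_W Γ(k_W))`; after exchanging the integrals, the
integral over `w` is a Gamma integral. The substitution `s = (θ_V / θ_W) (1 / t - 1)`, a
decreasing bijection from `(0, ψ′)` onto `(λ, ∞)`, turns the tail integral of this density into
the incomplete Beta integral.
-/

open MeasureTheory ProbabilityTheory

/-- Density of a Gamma distribution with shape `k > 0` and scale `θ > 0`. -/
noncomputable def gammaDensity (k θ : ℝ) (x : ℝ) : ENNReal :=
  if 0 < x then ENNReal.ofReal (x ^ (k - 1) * Real.exp (-x / θ) / (θ ^ k * Real.Gamma k)) else 0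

open Set Real

lemma measurable_gammaDensity (k θ : ℝ) : Measurable (gammaDensity k θ) :=
  Measurable.ite measurableSet_Ioi (by fun_prop) measurable_const

lemma gammaDensity_of_pos {k θ x : ℝ} (hx : 0 < x) :
    gammaDensity k θ x = ENNReal.ofReal (x ^ (k - 1) * exp (-x / θ) / (θ ^ k * Gamma k)) :=
  if_pos hx

lemma gammaDensity_of_nonpos (k θ : ℝ) {x : ℝ} (hx : x ≤ 0) : gammaDensity k θ x = 0 :=
  if_neg hx.not_gt

lemma gammaDensity_ne_top (k θ x : ℝ) : gammaDensity k θ x ≠ ⊤ := by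
  unfold gammaDensity
  split_ifs <;> simp

lemma lintegral_rpow_mul_exp_neg_mul_Ioi {a c : ℝ} (ha : 0 < a) (hc : 0 < c) :
    ∫⁻ x in Ioi 0, ENNReal.ofReal (x ^ (a - 1) * exp (-(c * x))) =
      ENNReal.ofReal (Gamma a / c ^ a) := by
  have hint : IntegrableOn (fun x : ℝ ↦ x ^ (a - 1) * exp (-(c * x))) (Ioi 0) := by
    simpa [rpow_one, neg_mul] using
      integrableOn_rpow_mul_exp_neg_mul_rpow (by linarith : -1 < a - 1) one_pos hc
  rw [← ofReal_integral_eq_lintegral_ofReal hint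
      ((ae_restrict_iff' measurableSet_Ioi).2 (ae_of_all _ fun x (hx : 0 < x) ↦ by positivity)),
    integral_rpow_mul_exp_neg_mul_Ioi ha hc, div_rpow zero_le_one hc.le, one_rpow,
    one_div_mul_eq_div]

lemma setLIntegral_Ioi_mul_left {c : ℝ} (hc : 0 < c) (a : ℝ) (g : ℝ → ENNReal) :
    ∫⁻ x in Ioi (c * a), g x = ∫⁻ s in Ioi a, ENNReal.ofReal c * g (c * s) := by
  rw [← image_mul_left_Ioi hc, lintegral_image_eq_lintegral_abs_deriv_mul measurableSet_Ioi
      (fun s _ ↦ (hasDerivAt_const_mul (x := s) c).hasDerivWithinAt)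
      (mul_right_injective₀ hc.ne').injOn, abs_of_pos hc]

noncomputable def gammaRatioDensity (kV θV kW θW s : ℝ) : ℝ :=
  Gamma (kV + kW) / (θV ^ kV * Gamma kV * (θW ^ kW * Gamma kW)) * s ^ (kV - 1) /
    (s / θV + 1 / θW) ^ (kV + kW)

lemma lintegral_gammaDensity_mul_gammaDensity_mul {kV θV kW θW s : ℝ} (hkV : 0 < kV)
    (hθV : 0 < θV) (hkW : 0 < kW) (hθW : 0 < θW) (hs : 0 < s) :
    ∫⁻ w in Ioi 0, gammaDensity kW θW w * (ENNReal.ofReal w * gammaDensity kV θV (w * s)) =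
      ENNReal.ofReal (gammaRatioDensity kV θV kW θW s) := by
  set c := s / θV + 1 / θW with hc_def
  set K := s ^ (kV - 1) / (θV ^ kV * Gamma kV * (θW ^ kW * Gamma kW)) with hK_def
  have hK : 0 ≤ K := by positivity
  have hc : 0 < c := by positivity
  calc _ = ∫⁻ w in Ioi 0, ENNReal.ofReal K *
        ENNReal.ofReal (w ^ (kV + kW - 1) * exp (-(c * w))) := by
        refine setLIntegral_congr_fun measurableSet_Ioi fun w (hw : 0 < w) ↦ ?_
        rw [gammaDensity_of_pos hw, gammaDensity_of_pos (mul_pos hw hs),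
          ← ENNReal.ofReal_mul hw.le, ← ENNReal.ofReal_mul (by positivity),
          ← ENNReal.ofReal_mul hK]
        congr 1
        rw [mul_rpow hw.le hs.le, show kV + kW - 1 = (kV - 1) + (kW - 1) + 1 by ring,
          rpow_add hw, rpow_add hw, rpow_one, show -(c * w) = -w / θW + -(w * s) / θV by
            rw [hc_def]; field_simp; ring, exp_add, hK_def]
        field_simp
    _ = ENNReal.ofReal K * ENNReal.ofReal (Gamma (kV + kW) / c ^ (kV + kW)) := by
        rw [lintegral_const_mul' _ _ ENNReal.ofReal_ne_top,
          lintegral_rpow_mul_exp_neg_mul_Ioi (by linarith) hc]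
    _ = _ := by
        rw [← ENNReal.ofReal_mul hK, gammaRatioDensity, hK_def, hc_def]
        ring_nf

lemma withDensity_prod_withDensity_setOf_le_div {kV θV kW θW lam : ℝ} (hkV : 0 < kV)
    (hθV : 0 < θV) (hkW : 0 < kW) (hθW : 0 < θW) (hlam : 0 < lam) :
    ((volume.withDensity (gammaDensity kV θV)).prod (volume.withDensity (gammaDensity kW θW)))
        {p : ℝ × ℝ | lam ≤ p.1 / p.2} =
      ∫⁻ s in Ioi lam, ENNReal.ofReal (gammaRatioDensity kV θV kW θW s) := by
  set S := {p : ℝ × ℝ | lam ≤ p.1 / p.2}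
  set μV := volume.withDensity (gammaDensity kV θV)
  have hS : MeasurableSet S :=
    measurableSet_le measurable_const (measurable_fst.div measurable_snd)
  have hslice : ∀ w, 0 < w → μV ((fun v ↦ (v, w)) ⁻¹' S) =
      ∫⁻ s in Ioi lam, ENNReal.ofReal w * gammaDensity kV θV (w * s) := by
    intro w hw
    have hpre : (fun v ↦ (v, w)) ⁻¹' S = Ici (w * lam) := by
      ext v
      simp [S, le_div_iff₀ hw, mul_comm]
    rw [hpre, withDensity_apply _ measurableSet_Ici, ← setLIntegral_congr Ioi_ae_eq_Ici,
      setLIntegral_Ioi_mul_left hw]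
  have hsupp :
      (fun w ↦ gammaDensity kW θW w * μV ((fun v ↦ (v, w)) ⁻¹' S)).support ⊆ Ioi 0 :=
    fun w hw ↦ mem_Ioi.2 <| not_le.1 fun hw0 ↦
      hw (by simp [gammaDensity_of_nonpos kW θW hw0])
  have hmeas : Measurable (Function.uncurry fun w s ↦
      gammaDensity kW θW w * (ENNReal.ofReal w * gammaDensity kV θV (w * s))) :=
    ((measurable_gammaDensity _ _).comp measurable_fst).mul (measurable_fst.ennreal_ofReal.mul
      ((measurable_gammaDensity _ _).comp (measurable_fst.mul measurable_snd)))
  rw [Measure.prod_apply_symm hS, lintegral_withDensity_eq_lintegral_mul _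
    (measurable_gammaDensity _ _) (measurable_measure_prodMk_right hS)]
  calc ∫⁻ w, gammaDensity kW θW w * μV ((fun v ↦ (v, w)) ⁻¹' S)
      = ∫⁻ w in Ioi 0, gammaDensity kW θW w * μV ((fun v ↦ (v, w)) ⁻¹' S) :=
        (setLIntegral_eq_of_support_subset hsupp).symm
    _ = ∫⁻ w in Ioi 0, ∫⁻ s in Ioi lam,
          gammaDensity kW θW w * (ENNReal.ofReal w * gammaDensity kV θV (w * s)) :=
        setLIntegral_congr_fun measurableSet_Ioi fun w (hw : 0 < w) ↦ by
          rw [hslice w hw, lintegral_const_mul' _ _ (gammaDensity_ne_top _ _ _)]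
    _ = ∫⁻ s in Ioi lam, ∫⁻ w in Ioi 0,
          gammaDensity kW θW w * (ENNReal.ofReal w * gammaDensity kV θV (w * s)) :=
        lintegral_lintegral_swap hmeas.aemeasurable
    _ = _ := setLIntegral_congr_fun measurableSet_Ioi fun s (hs : lam < s) ↦
        lintegral_gammaDensity_mul_gammaDensity_mul hkV hθV hkW hθW (hlam.trans hs)

lemma image_inv_sub_one_Ioo {θV θW lam : ℝ} (hθV : 0 < θV) (hθW : 0 < θW)
    (hlam : 0 ≤ lam) :
    (fun t ↦ θV / θW * (t⁻¹ - 1)) '' Ioo 0 (θV / (θV + lam * θW)) = Ioi lam := by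
  have hden : 0 < θV + lam * θW := by positivity
  ext s
  constructor
  · rintro ⟨t, ⟨ht0, htψ⟩, rfl⟩
    rw [lt_div_iff₀ hden] at htψ
    show lam < θV / θW * (t⁻¹ - 1)
    rw [show θV / θW * (t⁻¹ - 1) = θV * (1 - t) / (θW * t) by field_simp,
      lt_div_iff₀ (by positivity)]
    linarith
  · intro (hs : lam < s)
    have hden' : 0 < θV + s * θW := by nlinarith
    refine ⟨θV / (θV + s * θW), ⟨by positivity, ?_⟩, ?_⟩
    · exact div_lt_div_of_pos_left hθV hden (by nlinarith)
    · field_simp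
      ring

lemma mul_gammaRatioDensity_inv_sub_one {kV θV kW θW t : ℝ} (hθV : 0 < θV) (hθW : 0 < θW)
    (ht0 : 0 < t) (ht1 : t < 1) :
    θV / θW * (t ^ 2)⁻¹ * gammaRatioDensity kV θV kW θW (θV / θW * (t⁻¹ - 1)) =
      Gamma (kV + kW) / (Gamma kV * Gamma kW) * (t ^ (kW - 1) * (1 - t) ^ (kV - 1)) := by
  have h1t : 0 < 1 - t := by linarith
  have hsubst : θV / θW * (t⁻¹ - 1) = θV * (1 - t) / (θW * t) := by field_simp
  have hsum : θV * (1 - t) / (θW * t) / θV + 1 / θW = (θW * t)⁻¹ := by field_simp; ring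
  rw [gammaRatioDensity, hsubst, hsum, inv_rpow (by positivity),
    div_rpow (by positivity) (by positivity), mul_rpow hθV.le h1t.le, mul_rpow hθW.le ht0.le,
    mul_rpow hθW.le ht0.le, rpow_add hθW, rpow_add ht0, rpow_sub_one hθV.ne',
    rpow_sub_one hθW.ne', rpow_sub_one ht0.ne', rpow_sub_one ht0.ne', rpow_sub_one h1t.ne']
  field_simp

lemma lintegral_gammaRatioDensity_Ioi {kV θV kW θW lam : ℝ} (hθV : 0 < θV) (hθW : 0 < θW)
    (hlam : 0 ≤ lam) :
    ∫⁻ s in Ioi lam, ENNReal.ofReal (gammaRatioDensity kV θV kW θW s) =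
      ENNReal.ofReal (Gamma (kV + kW) / (Gamma kV * Gamma kW)) *
        ∫⁻ t in Ioo 0 (θV / (θV + lam * θW)),
          ENNReal.ofReal (t ^ (kW - 1) * (1 - t) ^ (kV - 1)) := by
  have hψ1 : θV / (θV + lam * θW) ≤ 1 := div_le_one_of_le₀ (by nlinarith) (by positivity)
  have hderiv : ∀ t ∈ Ioo 0 (θV / (θV + lam * θW)),
      HasDerivWithinAt (fun t ↦ θV / θW * (t⁻¹ - 1)) (θV / θW * -(t ^ 2)⁻¹)
        (Ioo 0 (θV / (θV + lam * θW))) t :=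
    fun t ht ↦ (((hasDerivAt_inv ht.1.ne').sub_const 1).const_mul _).hasDerivWithinAt
  have hinj : InjOn (fun t ↦ θV / θW * (t⁻¹ - 1)) (Ioo 0 (θV / (θV + lam * θW))) :=
    fun a _ b _ hab ↦ inv_inj.1 (sub_left_inj.1 (mul_left_cancel₀ (by positivity) hab))
  rw [← image_inv_sub_one_Ioo hθV hθW hlam,
    lintegral_image_eq_lintegral_abs_deriv_mul measurableSet_Ioo hderiv hinj,
    ← lintegral_const_mul' _ _ ENNReal.ofReal_ne_top]
  refine setLIntegral_congr_fun measurableSet_Ioo fun t ⟨ht0, htψ⟩ ↦ ?_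
  rw [mul_neg, abs_neg, abs_of_pos (by positivity), ← ENNReal.ofReal_mul (by positivity),
    ← ENNReal.ofReal_mul' (mul_nonneg (by positivity) (rpow_nonneg (by linarith) _)),
    mul_gammaRatioDensity_inv_sub_one hθV hθW ht0 (htψ.trans_le hψ1)]

lemma intervalIntegral_eq_toReal_setLIntegral_Ioo {f : ℝ → ℝ} {a b : ℝ} (hab : a ≤ b)
    (hf : ∀ x ∈ Ioo a b, 0 ≤ f x) (hfm : AEStronglyMeasurable f (volume.restrict (Ioo a b))) :
    ∫ x in a..b, f x = (∫⁻ x in Ioo a b, ENNReal.ofReal (f x)).toReal := by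
  rw [intervalIntegral.integral_of_le hab, integral_Ioc_eq_integral_Ioo,
    integral_eq_lintegral_of_nonneg_ae ((ae_restrict_iff' measurableSet_Ioo).2 (ae_of_all _ hf))
      hfm]

/-- Complementary CDF of a ratio of independent Gamma random variables:
`P(V/W ≥ λ)` equals the regularized incomplete Beta function with swapped shape
parameters evaluated at `ψ′ = θ_V/(θ_V + λθ_W)`. -/
theorem stmt15 {α : Type*} [MeasureSpace α] [IsProbabilityMeasure (ℙ : Measure α)]
    (V W : α → ℝ) (hV : Measurable V) (hW : Measurable W)
    (hindep : IndepFun V W)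
    (kV θV kW θW : ℝ) (hkV : 0 < kV) (hθV : 0 < θV) (hkW : 0 < kW) (hθW : 0 < θW)
    (hVlaw : Measure.map V ℙ = volume.withDensity (gammaDensity kV θV))
    (hWlaw : Measure.map W ℙ = volume.withDensity (gammaDensity kW θW)) :
    ∀ lam : ℝ, 0 < lam →
      (ℙ {ω | lam ≤ V ω / W ω}).toReal =
        (Real.Gamma (kV + kW) / (Real.Gamma kV * Real.Gamma kW)) *
          ∫ t in (0:ℝ)..(θV / (θV + lam * θW)), t ^ (kW - 1) * (1 - t) ^ (kV - 1) := by
  intro lam hlam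
  have hψ1 : θV / (θV + lam * θW) < 1 := (div_lt_one (by positivity)).2 (by nlinarith)
  have hlaw : (ℙ : Measure α).map (fun ω ↦ (V ω, W ω)) =
      (volume.withDensity (gammaDensity kV θV)).prod
        (volume.withDensity (gammaDensity kW θW)) := by
    rw [← hVlaw, ← hWlaw]
    exact hindep.map_prod_eq_prod_map_map hV.aemeasurable hW.aemeasurable
  have hprob : ℙ {ω | lam ≤ V ω / W ω} =
      (ℙ : Measure α).map (fun ω ↦ (V ω, W ω)) {p : ℝ × ℝ | lam ≤ p.1 / p.2} :=
    (Measure.map_apply (hV.prodMk hW)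
      (measurableSet_le measurable_const (measurable_fst.div measurable_snd))).symm
  rw [hprob, hlaw, withDensity_prod_withDensity_setOf_le_div hkV hθV hkW hθW hlam,
    lintegral_gammaRatioDensity_Ioi hθV hθW hlam.le, ENNReal.toReal_mul,
    ENNReal.toReal_ofReal (by positivity),
    intervalIntegral_eq_toReal_setLIntegral_Ioo (by positivity)
      (fun t ht ↦ mul_nonneg (rpow_nonneg ht.1.le _) (rpow_nonneg (by linarith [ht.2]) _))
      (by fun_prop)]
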